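/- In ETTC, for Lambek-style types (valency (1,1)) A and B, the slash-elimination rule is admissible: from t ⊢ Θ, (A\B)^i_j and s ⊢ Γ, A^α_i one can derive δ^α_β · s t ⊢ Γ, B^β_j, Θ, where (A\B)^i_j is defined as ∇^α_β(Ā^i_α ℘ B^β_j). -/

import Mathlib

set_option autoImplicit false

namespace TensorPaper

/-- Tensor term expressions over a terminal alphabet `T` and index set `ι`.
`elem w i j` is the word `w` with lower (left) index `i` and upper (right) index `j`;
`loop w` is a closed loop; `one` is the empty product. -/
inductive Expr (T ι : Type) : Type
  | one : Expr T ι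
  | elem : List T → ι → ι → Expr T ι
  | loop : List T → Expr T ι
  | mul : Expr T ι → Expr T ι → Expr T ι

namespace Expr

variable {T ι : Type}

def rename (f : ι → ι) : Expr T ι → Expr T ι
  | one => one
  | elem w i j => elem w (f i) (f j)
  | loop w => loop w
  | mul t s => mul (rename f t) (rename f s)

variable [DecidableEq ι]

/-- number of occurrences of `k` as an upper index -/
def supCount : Expr T ι → ι → ℕ
  | one, _ => 0
  | elem _ _ j, k => if j = k then 1 else 0
  | loop _, _ => 0
  | mul t s, k => supCount t k + supCount s k

/-- number of occurrences of `k` as a lower index -/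
def subCount : Expr T ι → ι → ℕ
  | one, _ => 0
  | elem _ i _, k => if i = k then 1 else 0
  | loop _, _ => 0
  | mul t s, k => subCount t k + subCount s k

/-- each index occurs at most once as an upper and at most once as a lower index -/
def WellFormed (t : Expr T ι) : Prop := ∀ k, supCount t k ≤ 1 ∧ subCount t k ≤ 1

def Occurs (t : Expr T ι) (k : ι) : Prop := supCount t k ≠ 0 ∨ subCount t k ≠ 0

/-- free upper indices -/
def FSup (t : Expr T ι) : Set ι := {k | supCount t k = 1 ∧ subCount t k = 0}

/-- free lower indices -/
def FSub (t : Expr T ι) : Set ι := {k | subCount t k = 1 ∧ supCount t k = 0}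

/-- a term expression is normal if it has no bound indices -/
def Normal (t : Expr T ι) : Prop := ∀ k, supCount t k = 0 ∨ subCount t k = 0

def LoopFree : Expr T ι → Prop
  | one => True
  | elem _ i j => i ≠ j
  | loop _ => False
  | mul t s => LoopFree t ∧ LoopFree s

end Expr

/-- Congruence of tensor term expressions. -/
inductive Cong {T ι : Type} : Expr T ι → Expr T ι → Prop
  | refl (t : Expr T ι) : Cong t t
  | symm {t s : Expr T ι} : Cong t s → Cong s t
  | trans {t s u : Expr T ι} : Cong t s → Cong s u → Cong t u
  | mul_congr {t t' s s' : Expr T ι} : Cong t t' → Cong s s' →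
      Cong (.mul t s) (.mul t' s')
  | assoc (t s u : Expr T ι) : Cong (.mul (.mul t s) u) (.mul t (.mul s u))
  | comm (t s : Expr T ι) : Cong (.mul t s) (.mul s t)
  | one_mul (t : Expr T ι) : Cong (.mul .one t) t
  | concat (u v : List T) (i j k : ι) : i ≠ j → j ≠ k →
      Cong (.mul (.elem u i j) (.elem v j k)) (.elem (u ++ v) i k)
  | loopify (u : List T) (i : ι) : Cong (.elem u i i) (.loop u)
  | rot (a : T) (w : List T) : Cong (.loop (a :: w)) (.loop (w ++ [a]))

/-- the Kronecker delta `δ_i^j` (empty word with lower index `i` and upper index `j`) -/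
def delta {T ι : Type} (i j : ι) : Expr T ι := .elem [] i j

/-- product of Kronecker deltas pairing corresponding lower and upper indices -/
def deltasLU {T ι : Type} (lowers uppers : List ι) : Expr T ι :=
  (lowers.zip uppers).foldr (fun p acc => .mul (.elem [] p.1 p.2) acc) .one

/-- a tensor term is regular if it is congruent to a normal loop-free product of
elementary regular expressions with no repeated index -/
def Regular {T ι : Type} [DecidableEq ι] (t : Expr T ι) : Prop :=
  ∃ s : Expr T ι, Cong t s ∧ s.WellFormed ∧ s.Normal ∧ s.LoopFree

end TensorPaper
namespace TensorPaper

/-- Extended tensor types: tensor types together with the binding operators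
`nabla a b A` (∇, binding the free lower index `a` and the free upper index `b`
of `A`) and `tri a b A` (△, binding likewise). -/
inductive ETy (P ι : Type) : Type
  | pos : P → List ι → List ι → ETy P ι
  | neg : P → List ι → List ι → ETy P ι
  | tens : ETy P ι → ETy P ι → ETy P ι
  | par : ETy P ι → ETy P ι → ETy P ι
  | nabla : ι → ι → ETy P ι → ETy P ι
  | tri : ι → ι → ETy P ι → ETy P ι

namespace ETy

variable {P ι : Type}

/-- duality of extended tensor types; it exchanges ∇ and △ -/
def dual : ETy P ι → ETy P ι
  | pos p I J => neg p J.reverse I.reverse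
  | neg p I J => pos p J.reverse I.reverse
  | tens A B => par B.dual A.dual
  | par A B => tens B.dual A.dual
  | nabla a b A => tri b a A.dual
  | tri a b A => nabla b a A.dual

variable [DecidableEq ι]

/-- free upper indices of an extended tensor type -/
def sups : ETy P ι → List ι
  | pos _ I _ => I
  | neg _ I _ => I
  | tens A B => A.sups ++ B.sups
  | par A B => A.sups ++ B.sups
  | nabla _ b A => A.sups.erase b
  | tri _ b A => A.sups.erase b

/-- free lower indices of an extended tensor type -/
def subs : ETy P ι → List ι
  | pos _ _ J => J
  | neg _ _ J => J
  | tens A B => A.subs ++ B.subs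
  | par A B => A.subs ++ B.subs
  | nabla a _ A => A.subs.erase a
  | tri a _ A => A.subs.erase a

end ETy

def ETy.rename {P ι : Type} (f : ι → ι) : ETy P ι → ETy P ι
  | .pos p I J => .pos p (I.map f) (J.map f)
  | .neg p I J => .neg p (I.map f) (J.map f)
  | .tens A B => .tens (A.rename f) (B.rename f)
  | .par A B => .par (A.rename f) (B.rename f)
  | .nabla a b A => .nabla (f a) (f b) (A.rename f)
  | .tri a b A => .tri (f a) (f b) (A.rename f)

end TensorPaper
namespace TensorPaper

/-- Derivability in extended tensor type calculus ETTC.  The flag `lam` imposes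
the Lambek restriction (nonempty context) on the (∇) rule; the flag `c` tells
whether the Cut rule is allowed. -/
inductive EDeriv {T ι P : Type} [DecidableEq ι] (v : P → ℕ × ℕ) (lam c : Bool) :
    Expr T ι → List (ETy P ι) → Prop
  | ax (p : P) (I J I' J' : List ι)
      (hI : I.length = (v p).2) (hJ : J.length = (v p).1)
      (hI' : I'.length = I.length) (hJ' : J'.length = J.length)
      (hnd : (I ++ J ++ I' ++ J').Nodup) :
      EDeriv v lam c (deltasLU (I.reverse ++ J') (I' ++ J.reverse))
        [ETy.neg p I J, ETy.pos p J' I']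
  | cut {t s : Expr T ι} {Γ Θ : List (ETy P ι)} {A : ETy P ι} (hc : c = true) :
      EDeriv v lam c t (Γ ++ [A]) → EDeriv v lam c s (A.dual :: Θ) →
      EDeriv v lam c (.mul t s) (Γ ++ Θ)
  | parR {t : Expr T ι} {Γ : List (ETy P ι)} {A B : ETy P ι} :
      EDeriv v lam c t (Γ ++ [A, B]) → EDeriv v lam c t (Γ ++ [ETy.par A B])
  | tensR {t s : Expr T ι} {Γ Θ : List (ETy P ι)} {A B : ETy P ι} :
      EDeriv v lam c t (Γ ++ [A]) → EDeriv v lam c s (B :: Θ) →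
      EDeriv v lam c (.mul t s) (Γ ++ [ETy.tens A B] ++ Θ)
  | perm {t : Expr T ι} {Γ Δ : List (ETy P ι)} :
      EDeriv v lam c t Γ → Γ.Perm Δ → EDeriv v lam c t Δ
  | congr {t s : Expr T ι} {Γ : List (ETy P ι)} :
      EDeriv v lam c t Γ → Cong t s → EDeriv v lam c s Γ
  | alpha {t : Expr T ι} {Γ : List (ETy P ι)} (f : ι → ι)
      (hf : Function.Injective f) :
      EDeriv v lam c t Γ → EDeriv v lam c (t.rename f) (Γ.map (ETy.rename f))
  | nablaR {t : Expr T ι} {Γ : List (ETy P ι)} {A : ETy P ι} (a b : ι)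
      (ha : a ∈ A.subs) (hb : b ∈ A.sups) (hres : lam = true → Γ ≠ []) :
      EDeriv v lam c (.mul (.elem [] b a) t) (Γ ++ [A]) →
      EDeriv v lam c t (Γ ++ [ETy.nabla a b A])
  | triR {t : Expr T ι} {Γ : List (ETy P ι)} {A : ETy P ι} (a b : ι)
      (ha : a ∈ A.subs) (hb : b ∈ A.sups) :
      EDeriv v lam c t (Γ ++ [A]) →
      EDeriv v lam c (.mul (.elem [] a b) t) (Γ ++ [ETy.tri a b A])

end TensorPaper

/-!
The (∇) and (℘) rules are invertible. Follow an occurrence of `∇^a_b C` (or `C ℘ D`) in a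
sequent upwards through a derivation: every rule that does not introduce it commutes with its
inversion, and (α) transports it along the renaming, until the rule that introduced it is reached,
whose premise is the inverted sequent. Inverting `(A\B)^i_j = ∇^α_β(Ā^i_α ℘ B^β_j)` in
`t ⊢ Θ, (A\B)^i_j` gives `δ^α_β·t ⊢ Θ, Ā^i_α, B^β_j`, and a Cut on `A^α_i` against
`s ⊢ Γ, A^α_i` yields the claim.
-/

namespace List

variable {α β : Type*}

theorem exists_perm_cons_of_mem {a : α} {l : List α} (h : a ∈ l) : ∃ l', l.Perm (a :: l') := by
  obtain ⟨s, t, rfl⟩ := append_of_mem h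
  exact ⟨s ++ t, perm_middle⟩

theorem Perm.cons_cases_of_append {a : α} {l₁ l₂ l : List α} (h : (l₁ ++ l₂).Perm (a :: l)) :
    (∃ l₁', l₁.Perm (a :: l₁') ∧ l.Perm (l₁' ++ l₂)) ∨
      ∃ l₂', l₂.Perm (a :: l₂') ∧ l.Perm (l₁ ++ l₂') := by
  rcases mem_append.1 (h.mem_iff.2 mem_cons_self) with h₁ | h₂
  · obtain ⟨l₁', hl₁⟩ := exists_perm_cons_of_mem h₁
    exact .inl ⟨l₁', hl₁, (h.symm.trans (hl₁.append_right l₂)).cons_inv⟩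
  · obtain ⟨l₂', hl₂⟩ := exists_perm_cons_of_mem h₂
    exact .inr ⟨l₂', hl₂, (h.symm.trans ((hl₂.append_left l₁).trans perm_middle)).cons_inv⟩

theorem Perm.cons_cases_of_ne {a b : α} {l₁ l₂ l : List α} (hab : a ≠ b)
    (h : (l₁ ++ b :: l₂).Perm (a :: l)) :
    (∃ l₁', l₁.Perm (a :: l₁') ∧ l.Perm (l₁' ++ b :: l₂)) ∨
      ∃ l₂', l₂.Perm (a :: l₂') ∧ l.Perm (l₁ ++ b :: l₂') := by
  refine h.cons_cases_of_append.imp_right fun ⟨m, hbm, hm⟩ => ?_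
  have ha : a ∈ l₂ := by simpa [hab] using hbm.mem_iff.2 mem_cons_self
  obtain ⟨l₂', hl₂⟩ := exists_perm_cons_of_mem ha
  have hm' : m.Perm (b :: l₂') :=
    (hbm.symm.trans ((hl₂.cons b).trans (Perm.swap a b l₂'))).cons_inv
  exact ⟨l₂', hl₂, hm.trans (hm'.append_left l₁)⟩

theorem Perm.exists_of_map_perm_cons {f : α → β} {l : List α} {b : β} {m : List β}
    (h : (l.map f).Perm (b :: m)) : ∃ a l', l.Perm (a :: l') ∧ f a = b ∧ m.Perm (l'.map f) := by
  obtain ⟨a, ha, rfl⟩ := mem_map.1 (h.mem_iff.2 mem_cons_self)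
  obtain ⟨l', hl⟩ := exists_perm_cons_of_mem ha
  exact ⟨a, l', hl, rfl, (h.symm.trans (hl.map f)).cons_inv⟩

end List

namespace TensorPaper

theorem Cong.mul_left_comm {T ι : Type} (a b c : Expr T ι) :
    Cong (.mul a (.mul b c)) (.mul b (.mul a c)) :=
  ((Cong.assoc a b c).symm.trans ((Cong.comm a b).mul_congr (.refl c))).trans (.assoc b a c)

section Inversion

variable {T ι P : Type} [DecidableEq ι] {v : P → ℕ × ℕ} {lam c : Bool}

/-- `e` is the factor the inverted rule strips off the term: `δ` for (∇), `1` for (℘). -/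
def InvertibleAt (v : P → ℕ × ℕ) (lam c : Bool) (F : ETy P ι) (Ψ : List (ETy P ι))
    (e t : Expr T ι) (Δ : List (ETy P ι)) : Prop :=
  ∀ ⦃Θ⦄, Δ.Perm (F :: Θ) → EDeriv v lam c (.mul e t) (Ψ ++ Θ)

namespace InvertibleAt

variable {F : ETy P ι} {Ψ Γ Δ : List (ETy P ι)} {e t s : Expr T ι}

theorem of_not_mem (hF : F ∉ Δ) : InvertibleAt v lam c F Ψ e t Δ :=
  fun _ hp => absurd (hp.mem_iff.2 List.mem_cons_self) hF

theorem of_premise (h : EDeriv v lam c (.mul e t) (Γ ++ Ψ)) :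
    InvertibleAt v lam c F Ψ e t (Γ ++ [F]) := fun _ hp =>
  h.perm (List.perm_append_comm.trans
    (((List.perm_append_singleton F Γ).symm.trans hp).cons_inv.append_left Ψ))

theorem perm (h : InvertibleAt v lam c F Ψ e t Γ) (hΓ : Γ.Perm Δ) :
    InvertibleAt v lam c F Ψ e t Δ :=
  fun _ hp => h (hΓ.trans hp)

theorem congr (h : InvertibleAt v lam c F Ψ e t Δ) (hts : Cong t s) :
    InvertibleAt v lam c F Ψ e s Δ :=
  fun _ hp => (h hp).congr ((Cong.refl e).mul_congr hts)

theorem alpha (g : ι → ι) (hg : Function.Injective g)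
    (hpre : ∀ Z, Z.rename g = F →
      ∃ Ψ₀ e₀, InvertibleAt v lam c Z Ψ₀ e₀ t Δ ∧ Ψ₀.map (ETy.rename g) = Ψ ∧ e₀.rename g = e) :
    InvertibleAt v lam c F Ψ e (t.rename g) (Δ.map (ETy.rename g)) := fun Θ hp => by
  obtain ⟨Z, Δ', hΔ, hZ, hΘ⟩ := hp.exists_of_map_perm_cons
  obtain ⟨Ψ₀, e₀, hZinv, rfl, rfl⟩ := hpre Z hZ
  have h := (hZinv hΔ).alpha g hg
  rw [List.map_append] at h
  exact h.perm (hΘ.symm.append_left _)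

theorem of_unary {X : ETy P ι} {Φ : List (ETy P ι)} {t' : Expr T ι} (hF : F ≠ X)
    (h : InvertibleAt v lam c F Ψ e t (Γ ++ Φ))
    (rule : ∀ Γ', EDeriv v lam c (.mul e t) (Ψ ++ Γ' ++ Φ) →
      EDeriv v lam c (.mul e t') (Ψ ++ Γ' ++ [X])) :
    InvertibleAt v lam c F Ψ e t' (Γ ++ [X]) := fun Θ hp => by
  rcases hp.cons_cases_of_ne hF with ⟨Γ', hΓ, hΘ⟩ | ⟨_, hnil, _⟩
  · have h' : EDeriv v lam c (.mul e t) (Ψ ++ Γ' ++ Φ) := by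
      simpa only [List.append_assoc] using h (Θ := Γ' ++ Φ) (hΓ.append_right Φ)
    exact (rule Γ' h').perm (by simpa only [List.append_assoc] using hΘ.symm.append_left Ψ)
  · exact absurd hnil.length_eq (by simp)

theorem parR {A B : ETy P ι} (hF : F ≠ .par A B)
    (h : InvertibleAt v lam c F Ψ e t (Γ ++ [A, B])) :
    InvertibleAt v lam c F Ψ e t (Γ ++ [.par A B]) :=
  h.of_unary hF fun _ h' => h'.parR

theorem nablaR {A : ETy P ι} {a b : ι} (hΨ : Ψ ≠ []) (hF : F ≠ .nabla a b A)
    (ha : a ∈ A.subs) (hb : b ∈ A.sups)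
    (h : InvertibleAt v lam c F Ψ e (.mul (.elem [] b a) t) (Γ ++ [A])) :
    InvertibleAt v lam c F Ψ e t (Γ ++ [.nabla a b A]) :=
  h.of_unary hF fun _ h' =>
    (h'.congr (Cong.mul_left_comm _ _ _)).nablaR a b ha hb fun _ => by simp [hΨ]

theorem triR {A : ETy P ι} {a b : ι} (hF : F ≠ .tri a b A)
    (ha : a ∈ A.subs) (hb : b ∈ A.sups) (h : InvertibleAt v lam c F Ψ e t (Γ ++ [A])) :
    InvertibleAt v lam c F Ψ e (.mul (.elem [] a b) t) (Γ ++ [.tri a b A]) :=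
  h.of_unary hF fun _ h' => (h'.triR a b ha hb).congr (Cong.mul_left_comm _ _ _)

theorem cut {A : ETy P ι} (hc : c = true)
    (h₁ : EDeriv v lam c t (Γ ++ [A])) (h₂ : EDeriv v lam c s (A.dual :: Δ))
    (ih₁ : InvertibleAt v lam c F Ψ e t (Γ ++ [A]))
    (ih₂ : InvertibleAt v lam c F Ψ e s (A.dual :: Δ)) :
    InvertibleAt v lam c F Ψ e (.mul t s) (Γ ++ Δ) := fun Θ hp => by
  rcases hp.cons_cases_of_append with ⟨Γ', hΓ, hΘ⟩ | ⟨Δ', hΔ, hΘ⟩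
  · have h : EDeriv v lam c (.mul e t) (Ψ ++ Γ' ++ [A]) := by
      simpa only [List.append_assoc] using ih₁ (Θ := Γ' ++ [A]) (hΓ.append_right [A])
    exact ((EDeriv.cut hc h h₂).congr (.assoc _ _ _)).perm
      (by simpa only [List.append_assoc] using hΘ.symm.append_left Ψ)
  · have h := ih₂ ((hΔ.cons _).trans (.swap _ _ _))
    exact ((EDeriv.cut hc h₁ (h.perm List.perm_middle)).congr (Cong.mul_left_comm _ _ _)).perm
      ((List.perm_append_comm_assoc _ _ _).trans (hΘ.symm.append_left Ψ))

theorem tensR {A B : ETy P ι} (hF : F ≠ .tens A B)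
    (h₁ : EDeriv v lam c t (Γ ++ [A])) (h₂ : EDeriv v lam c s (B :: Δ))
    (ih₁ : InvertibleAt v lam c F Ψ e t (Γ ++ [A]))
    (ih₂ : InvertibleAt v lam c F Ψ e s (B :: Δ)) :
    InvertibleAt v lam c F Ψ e (.mul t s) (Γ ++ [.tens A B] ++ Δ) := fun Θ hp => by
  rw [List.append_assoc, List.singleton_append] at hp
  rcases hp.cons_cases_of_ne hF with ⟨Γ', hΓ, hΘ⟩ | ⟨Δ', hΔ, hΘ⟩
  · have h : EDeriv v lam c (.mul e t) (Ψ ++ Γ' ++ [A]) := by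
      simpa only [List.append_assoc] using ih₁ (Θ := Γ' ++ [A]) (hΓ.append_right [A])
    exact ((EDeriv.tensR h h₂).congr (.assoc _ _ _)).perm (by simpa using hΘ.symm.append_left Ψ)
  · have h := ih₂ ((hΔ.cons _).trans (.swap _ _ _))
    refine ((EDeriv.tensR h₁ (h.perm List.perm_middle)).congr (Cong.mul_left_comm _ _ _)).perm ?_
    rw [← List.singleton_append, ← List.append_assoc] at hΘ
    exact (List.perm_append_comm_assoc _ _ _).trans (hΘ.symm.append_left Ψ)

end InvertibleAt

theorem EDeriv.invertibleAt_par {t : Expr T ι} {Δ : List (ETy P ι)} {A B : ETy P ι}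
    (h : EDeriv v lam c t Δ) : InvertibleAt v lam c (.par A B) [A, B] .one t Δ := by
  induction h generalizing A B with
  | ax => exact .of_not_mem (by simp)
  | cut hc h₁ h₂ ih₁ ih₂ => exact ih₁.cut hc h₁ h₂ ih₂
  | @parR t Γ A' B' h ih =>
      by_cases hF : ETy.par A B = .par A' B'
      · obtain ⟨rfl, rfl⟩ := ETy.par.inj hF
        exact .of_premise (h.congr (Cong.one_mul t).symm)
      · exact ih.parR hF
  | tensR h₁ h₂ ih₁ ih₂ => exact ih₁.tensR (by simp) h₁ h₂ ih₂
  | perm _ hΓ ih => exact ih.perm hΓ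
  | congr _ hts ih => exact ih.congr hts
  | alpha g hg _ ih =>
      refine .alpha g hg fun Z hZ => ?_
      cases Z <;> simp only [ETy.rename, reduceCtorEq, ETy.par.injEq] at hZ
      obtain ⟨rfl, rfl⟩ := hZ
      exact ⟨_, _, ih, rfl, rfl⟩
  | nablaR a b ha hb _ _ ih => exact ih.nablaR (by simp) (by simp) ha hb
  | triR a b ha hb _ ih => exact ih.triR (by simp) ha hb

theorem EDeriv.invertibleAt_nabla {t : Expr T ι} {Δ : List (ETy P ι)} {a b : ι} {C : ETy P ι}
    (h : EDeriv v lam c t Δ) : InvertibleAt v lam c (.nabla a b C) [C] (.elem [] b a) t Δ := by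
  induction h generalizing a b C with
  | ax => exact .of_not_mem (by simp)
  | cut hc h₁ h₂ ih₁ ih₂ => exact ih₁.cut hc h₁ h₂ ih₂
  | parR _ ih => exact ih.parR (by simp)
  | tensR h₁ h₂ ih₁ ih₂ => exact ih₁.tensR (by simp) h₁ h₂ ih₂
  | perm _ hΓ ih => exact ih.perm hΓ
  | congr _ hts ih => exact ih.congr hts
  | alpha g hg _ ih =>
      refine .alpha g hg fun Z hZ => ?_
      cases Z <;> simp only [ETy.rename, reduceCtorEq, ETy.nabla.injEq] at hZ
      obtain ⟨rfl, rfl, rfl⟩ := hZ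
      exact ⟨_, _, ih, rfl, rfl⟩
  | @nablaR t Γ A a' b' ha hb _ h ih =>
      by_cases hF : ETy.nabla a b C = .nabla a' b' A
      · obtain ⟨rfl, rfl, rfl⟩ := ETy.nabla.inj hF
        exact .of_premise h
      · exact ih.nablaR (by simp) hF ha hb
  | triR a b ha hb _ ih => exact ih.triR (by simp) ha hb

theorem EDeriv.par_inv {t : Expr T ι} {Γ : List (ETy P ι)} {A B : ETy P ι}
    (h : EDeriv v lam c t (Γ ++ [.par A B])) : EDeriv v lam c t (Γ ++ [A, B]) :=
  ((h.invertibleAt_par (List.perm_append_singleton _ _)).congr (Cong.one_mul t)).perm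
    List.perm_append_comm

theorem EDeriv.nabla_inv {t : Expr T ι} {Γ : List (ETy P ι)} {a b : ι} {C : ETy P ι}
    (h : EDeriv v lam c t (Γ ++ [.nabla a b C])) :
    EDeriv v lam c (.mul (.elem [] b a) t) (Γ ++ [C]) :=
  (h.invertibleAt_nabla (List.perm_append_singleton _ _)).perm List.perm_append_comm

end Inversion

theorem stmt17_general {T ι P : Type} [DecidableEq ι] (v : P → ℕ × ℕ)
    (A B : ι → ι → ETy P ι)
    (i j a b : ι)
    (t s : Expr T ι) (Θ Γ : List (ETy P ι))
    (h₁ : EDeriv v false true t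
      (Θ ++ [ETy.nabla a b (ETy.par ((A a i).dual) (B b j))]))
    (h₂ : EDeriv v false true s (Γ ++ [A a i])) :
    EDeriv v false true (.mul (.elem [] b a) (.mul s t))
      (Γ ++ [B b j] ++ Θ) := by
  have h₃ : EDeriv v false true (.mul (.elem [] b a) t) ((A a i).dual :: B b j :: Θ) :=
    h₁.nabla_inv.par_inv.perm List.perm_append_comm
  simpa using (EDeriv.cut rfl h₂ h₃).congr (Cong.mul_left_comm _ _ _)

/-- Slash elimination for Lambek-style types is admissible in ETTC:
from `t ⊢ Θ, (A\B)^i_j` and `s ⊢ Γ, A^α_i` one derives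
`δ^α_β·st ⊢ Γ, B^β_j, Θ`, with `(A\B)^i_j = ∇^α_β(Ā^i_α ℘ B^β_j)`. -/
theorem stmt17 {T ι P : Type} [DecidableEq ι] (v : P → ℕ × ℕ)
    (A B : ι → ι → ETy P ι)
    (hA : ∀ u l, (A u l).sups = [u] ∧ (A u l).subs = [l])
    (hB : ∀ u l, (B u l).sups = [u] ∧ (B u l).subs = [l])
    (i j a b : ι) (hd : ([i, j, a, b] : List ι).Nodup)
    (t s : Expr T ι) (Θ Γ : List (ETy P ι))
    (h₁ : EDeriv v false true t
      (Θ ++ [ETy.nabla a b (ETy.par ((A a i).dual) (B b j))]))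
    (h₂ : EDeriv v false true s (Γ ++ [A a i])) :
    EDeriv v false true (.mul (.elem [] b a) (.mul s t))
      (Γ ++ [B b j] ++ Θ) :=
  stmt17_general v A B i j a b t s Θ Γ h₁ h₂

end TensorPaper
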